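/- arXiv:2412.20697 — 5 statements merged into one kernel-verified Lean document; each statement's English description precedes it below -/
import Mathlib

section
/- Let B ⊂ ℝ³ be a bounded measurable set, let s ∈ ℂ, and let f : ℝ³ → ℂ be integrable on B. Then for every x₀ ∈ ℝ³ whose distance to B is positive, the volume potential v(x) = ∫_B Φ_s(x,y) f(y) dy is Fréchet differentiable at x₀, and its derivative applied to a vector h ∈ ℝ³ equals ∫_B (i s − 1/‖x₀−y‖) · Φ_s(x₀,y) · (⟨x₀ − y, h⟩ / ‖x₀−y‖) · f(y) dy, i.e. one may differentiate under the integral sign. -/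
/-!
For `x` in the ball of radius `d / 2` around `x₀`, where `d = infDist x₀ B`, and `y` in the
closure of the bounded set `B`, the distance `‖x - y‖` stays in a compact interval
`[d / 2, R] ⊂ (0, ∞)`. The kernel is a radial profile `g ‖x - y‖` with `g` smooth on `(0, ∞)`,
so `g` and `g'` are bounded on that interval; this dominates the `x`-derivative of the integrand
by a multiple of `‖f‖`, and differentiation under the integral sign applies.
-/

open MeasureTheory

/-- The Laplace-domain fundamental solution of the Helmholtz equation in ℝ³:
`Φ_s(x,y) = exp(i s ‖x−y‖) / (4π ‖x−y‖)`. -/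
noncomputable def Phi (s : ℂ) (x y : EuclideanSpace ℝ (Fin 3)) : ℂ :=
  Complex.exp (Complex.I * s * (‖x - y‖ : ℂ)) / ((4 * Real.pi * ‖x - y‖ : ℝ) : ℂ)

open Metric Set Filter

theorem dist_mem_Icc_of_mem_closure {α : Type*} [PseudoMetricSpace α] {B : Set α}
    {x₀ x y : α} {M : ℝ} (hBM : B ⊆ closedBall x₀ M) (hy : y ∈ closure B)
    (hx : x ∈ ball x₀ (infDist x₀ B / 2)) :
    dist x y ∈ Icc (infDist x₀ B / 2) (M + infDist x₀ B / 2) := by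
  have hyM : dist y x₀ ≤ M := closure_minimal hBM isClosed_closedBall hy
  have hdy : infDist x₀ B ≤ dist x₀ y :=
    infDist_closure (s := B) ▸ infDist_le_dist_of_mem hy
  rw [mem_ball, dist_comm] at hx
  constructor <;>
    linarith [dist_triangle x₀ x y, dist_triangle x x₀ y, dist_comm x₀ y, dist_comm x x₀]

section
variable {α : Type*} [TopologicalSpace α] [MeasurableSpace α] [OpensMeasurableSpace α]
  {μ : Measure α} {B : Set α}

theorem ae_restrict_mem_closure : ∀ᵐ y ∂μ.restrict B, y ∈ closure B :=
  ae_mono (Measure.restrict_mono subset_closure le_rfl)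
    (ae_restrict_mem isClosed_closure.measurableSet)

theorem ContinuousOn.aestronglyMeasurable_restrict_of_closure {β : Type*} [TopologicalSpace β]
    [TopologicalSpace.PseudoMetrizableSpace β] [SecondCountableTopologyEither α β] {φ : α → β}
    (hφ : ContinuousOn φ (closure B)) : AEStronglyMeasurable φ (μ.restrict B) :=
  (hφ.aestronglyMeasurable isClosed_closure.measurableSet).mono_measure
    (Measure.restrict_mono subset_closure le_rfl)
end

section
variable {E F : Type*} [NormedAddCommGroup E] [InnerProductSpace ℝ E] [NormedAddCommGroup F]
  [NormedSpace ℝ F]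

theorem hasFDerivAt_norm_of_ne_zero {x : E} (hx : x ≠ 0) :
    HasFDerivAt (‖·‖) (‖x‖⁻¹ • innerSL ℝ x) x := by
  have hsq := (Real.hasDerivAt_sqrt (pow_ne_zero 2 (norm_ne_zero_iff.2 hx))).comp_hasFDerivAt x
    (hasStrictFDerivAt_norm_sq x).hasFDerivAt
  rw [show ((√·) ∘ fun z : E => ‖z‖ ^ 2) = (‖·‖) from funext fun z => by simp] at hsq
  refine hsq.congr_fderiv ?_
  ext v
  simp only [Real.sqrt_sq (norm_nonneg x), one_div, mul_inv_rev, smul_apply, coe_innerSL_apply,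
    nsmul_eq_mul, Nat.cast_ofNat, smul_eq_mul]
  field_simp

noncomputable def radialFDeriv (g' : ℝ → F) (x y : E) : E →L[ℝ] F :=
  (‖x - y‖⁻¹ • innerSL ℝ (x - y)).smulRight (g' ‖x - y‖)

theorem radialFDeriv_apply (g' : ℝ → F) (x y h : E) :
    radialFDeriv g' x y h = (inner ℝ (x - y) h / ‖x - y‖) • g' ‖x - y‖ := by
  simp [radialFDeriv, div_eq_inv_mul, inner_sub_left]

theorem norm_radialFDeriv_le (g' : ℝ → F) (x y : E) :
    ‖radialFDeriv g' x y‖ ≤ ‖g' ‖x - y‖‖ := by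
  rw [radialFDeriv, ContinuousLinearMap.norm_smulRight_apply, norm_smul, innerSL_apply_norm,
    norm_inv, norm_norm]
  exact mul_le_of_le_one_left (norm_nonneg _) (inv_mul_le_one_of_le₀ le_rfl (norm_nonneg _))

theorem continuousOn_radialFDeriv {g' : ℝ → F} (hg' : ContinuousOn g' (Ioi 0)) {x : E}
    {K : Set E} (hK : ∀ y ∈ K, x ≠ y) : ContinuousOn (radialFDeriv g' x) K := by
  have hr : ContinuousOn (fun y => ‖x - y‖) K := by fun_prop
  have hpos : MapsTo (fun y => ‖x - y‖) K (Ioi 0) := fun y hy =>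
    norm_pos_iff.2 (sub_ne_zero.2 (hK y hy))
  have hN : ContinuousOn (fun y => ‖x - y‖⁻¹ • innerSL ℝ (x - y)) K :=
    (hr.inv₀ fun y hy => (hpos hy).ne').smul (by fun_prop)
  have hS : Continuous fun p : (E →L[ℝ] ℝ) × F => p.1.smulRight p.2 := by fun_prop
  exact hS.comp_continuousOn (hN.prodMk (hg'.comp hr hpos))

theorem HasDerivAt.hasFDerivAt_comp_norm_sub {g g' : ℝ → F} {x y : E} (hxy : x ≠ y)
    (hg : HasDerivAt g (g' ‖x - y‖) ‖x - y‖) :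
    HasFDerivAt (fun z => g ‖z - y‖) (radialFDeriv g' x y) x := by
  have hn := (hasFDerivAt_norm_of_ne_zero (sub_ne_zero.2 hxy)).comp x
    ((hasFDerivAt_id x).sub_const y)
  exact (hg.hasFDerivAt.comp x hn).congr_fderiv <| by
    ext; simp [radialFDeriv, mul_smul, sub_smul]
end

section
variable {E : Type*} [NormedAddCommGroup E] [InnerProductSpace ℝ E]
  [SecondCountableTopology E] [MeasurableSpace E] [OpensMeasurableSpace E]

theorem exists_hasFDerivAt_integral_radial_mul {μ : Measure E} {B : Set E}
    (hB : Bornology.IsBounded B) {g g' : ℝ → ℂ} (hg : ∀ t, 0 < t → HasDerivAt g (g' t) t)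
    (hg' : ContinuousOn g' (Ioi 0)) {f : E → ℂ} (hf : Integrable f (μ.restrict B)) {x₀ : E}
    (hx₀ : 0 < infDist x₀ B) :
    ∃ L : E →L[ℝ] ℂ, HasFDerivAt (fun x => ∫ y in B, g ‖x - y‖ * f y ∂μ) L x₀ ∧
      ∀ h, L h =
        ∫ y in B, g' ‖x₀ - y‖ * ((inner ℝ (x₀ - y) h / ‖x₀ - y‖ : ℝ) : ℂ) * f y ∂μ := by
  set d := infDist x₀ B
  obtain ⟨M, hBM⟩ := hB.subset_closedBall x₀
  set K := Icc (d / 2) (M + d / 2)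
  have hK : K ⊆ Ioi 0 := fun t ht => lt_of_lt_of_le (half_pos hx₀) ht.1
  have hmem : ∀ x ∈ ball x₀ (d / 2), ∀ y ∈ closure B, ‖x - y‖ ∈ K := fun x hx y hy =>
    dist_eq_norm x y ▸ dist_mem_Icc_of_mem_closure hBM hy hx
  have hne : ∀ x ∈ ball x₀ (d / 2), ∀ y ∈ closure B, x ≠ y := fun x hx y hy =>
    sub_ne_zero.1 (norm_pos_iff.1 (hK (hmem x hx y hy)))
  have hx₀ball : x₀ ∈ ball x₀ (d / 2) := mem_ball_self (half_pos hx₀)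
  have hgc : ContinuousOn g (Ioi 0) := fun t ht => (hg t ht).continuousAt.continuousWithinAt
  obtain ⟨C₀, hC₀⟩ := isCompact_Icc.exists_bound_of_continuousOn (hgc.mono hK)
  obtain ⟨C₁, hC₁⟩ := isCompact_Icc.exists_bound_of_continuousOn (hg'.mono hK)
  have hg_meas : ∀ x ∈ ball x₀ (d / 2),
      AEStronglyMeasurable (fun y => g ‖x - y‖) (μ.restrict B) := fun x hx =>
    (hgc.comp (by fun_prop) fun y hy =>
      hK (hmem x hx y hy)).aestronglyMeasurable_restrict_of_closure
  set F' : E → E → E →L[ℝ] ℂ := fun x y => f y • radialFDeriv g' x y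
  have hF'_meas : AEStronglyMeasurable (F' x₀) (μ.restrict B) :=
    hf.1.smul
      (continuousOn_radialFDeriv hg' (hne x₀ hx₀ball)).aestronglyMeasurable_restrict_of_closure
  have h_bound : ∀ᵐ y ∂μ.restrict B, ∀ x ∈ ball x₀ (d / 2), ‖F' x y‖ ≤ C₁ * ‖f y‖ := by
    filter_upwards [ae_restrict_mem_closure] with y hy x hx
    rw [norm_smul, mul_comm]
    gcongr
    exact (norm_radialFDeriv_le g' x y).trans (hC₁ _ (hmem x hx y hy))
  have h_diff : ∀ᵐ y ∂μ.restrict B, ∀ x ∈ ball x₀ (d / 2),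
      HasFDerivAt (fun x => g ‖x - y‖ * f y) (F' x y) x := by
    filter_upwards [ae_restrict_mem_closure] with y hy x hx
    exact ((hg _ (hK (hmem x hx y hy))).hasFDerivAt_comp_norm_sub (hne x hx y hy)).mul_const _
  refine ⟨_, hasFDerivAt_integral_of_dominated_of_fderiv_le (ball_mem_nhds x₀ (half_pos hx₀))
    (eventually_of_mem (ball_mem_nhds x₀ (half_pos hx₀)) fun x hx => (hg_meas x hx).mul hf.1)
    (hf.bdd_mul (hg_meas x₀ hx₀ball)
      (ae_restrict_mem_closure.mono fun y hy => hC₀ _ (hmem x₀ hx₀ball y hy)))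
    hF'_meas h_bound (hf.norm.const_mul C₁) h_diff, fun h => ?_⟩
  have hF'_int : Integrable (F' x₀) (μ.restrict B) :=
    (hf.norm.const_mul C₁).mono' hF'_meas (h_bound.mono fun y hy => hy x₀ hx₀ball)
  rw [ContinuousLinearMap.integral_apply hF'_int]
  congr 1 with y
  simp only [F', FunLike.coe_smul, Pi.smul_apply, radialFDeriv_apply, smul_eq_mul,
    Complex.real_smul]
  ring
end

-- `Phi s x y` is definitionally `helmholtzProfile s ‖x - y‖`; `stmt3` relies on this.
noncomputable def helmholtzProfile (s : ℂ) (t : ℝ) : ℂ :=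
  Complex.exp (Complex.I * s * t) / ((4 * Real.pi * t : ℝ) : ℂ)

theorem hasDerivAt_helmholtzProfile (s : ℂ) {t : ℝ} (ht : 0 < t) :
    HasDerivAt (helmholtzProfile s)
      ((Complex.I * s - 1 / (t : ℂ)) * helmholtzProfile s t) t := by
  have hexp : HasDerivAt (fun t : ℝ => Complex.exp (Complex.I * s * t))
      (Complex.exp (Complex.I * s * t) * (Complex.I * s)) t := by
    simpa using ((hasDerivAt_id t).ofReal_comp.const_mul (Complex.I * s)).cexp
  have hden :
      HasDerivAt (fun t : ℝ => ((4 * Real.pi * t : ℝ) : ℂ)) ((4 * Real.pi : ℝ) : ℂ) t := by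
    simpa using ((hasDerivAt_id t).const_mul (4 * Real.pi)).ofReal_comp
  refine (hexp.div hden (by exact_mod_cast (by positivity : 4 * Real.pi * t ≠ 0))).congr_deriv ?_
  have : (t : ℂ) ≠ 0 := by exact_mod_cast ht.ne'
  have : (Real.pi : ℂ) ≠ 0 := by exact_mod_cast Real.pi_ne_zero
  simp only [helmholtzProfile]
  push_cast
  field_simp

theorem continuousOn_helmholtzProfile_deriv (s : ℂ) :
    ContinuousOn (fun t : ℝ => (Complex.I * s - 1 / (t : ℂ)) * helmholtzProfile s t)
      (Ioi 0) := by
  have hΦ : ContinuousOn (helmholtzProfile s) (Ioi 0) := fun t ht =>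
    (hasDerivAt_helmholtzProfile s ht).continuousAt.continuousWithinAt
  refine (continuousOn_const.sub (continuousOn_const.div (by fun_prop) ?_)).mul hΦ
  intro t ht; exact_mod_cast (ne_of_gt ht)

theorem stmt3_general (B : Set (EuclideanSpace ℝ (Fin 3)))
    (hBb : Bornology.IsBounded B)
    (s : ℂ) (f : EuclideanSpace ℝ (Fin 3) → ℂ)
    (hf : Integrable f (volume.restrict B))
    (x₀ : EuclideanSpace ℝ (Fin 3)) (hx₀ : 0 < Metric.infDist x₀ B) :
    ∃ L : EuclideanSpace ℝ (Fin 3) →L[ℝ] ℂ,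
      HasFDerivAt (fun x => ∫ y in B, Phi s x y * f y) L x₀ ∧
      ∀ h : EuclideanSpace ℝ (Fin 3),
        L h = ∫ y in B,
          (Complex.I * s - 1 / ((‖x₀ - y‖ : ℝ) : ℂ)) * Phi s x₀ y *
            (((inner ℝ (x₀ - y) h : ℝ) / ‖x₀ - y‖ : ℝ) : ℂ) * f y :=
  exists_hasFDerivAt_integral_radial_mul hBb (fun _ ht => hasDerivAt_helmholtzProfile s ht)
    (continuousOn_helmholtzProfile_deriv s) hf hx₀

/-- If `B ⊂ ℝ³` is bounded and measurable, `f` is integrable on `B`, and the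
distance from `x₀` to `B` is positive, then the volume potential `v(x) = ∫_B Φ_s(x,y) f(y) dy`
is Fréchet differentiable at `x₀` and its derivative applied to `h` is
`∫_B (is − 1/‖x₀−y‖) Φ_s(x₀,y) (⟨x₀−y,h⟩/‖x₀−y‖) f(y) dy`. -/
theorem stmt3 (B : Set (EuclideanSpace ℝ (Fin 3)))
    (hBb : Bornology.IsBounded B) (hBm : MeasurableSet B)
    (s : ℂ) (f : EuclideanSpace ℝ (Fin 3) → ℂ)
    (hf : Integrable f (volume.restrict B))
    (x₀ : EuclideanSpace ℝ (Fin 3)) (hx₀ : 0 < Metric.infDist x₀ B) :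
    ∃ L : EuclideanSpace ℝ (Fin 3) →L[ℝ] ℂ,
      HasFDerivAt (fun x => ∫ y in B, Phi s x y * f y) L x₀ ∧
      ∀ h : EuclideanSpace ℝ (Fin 3),
        L h = ∫ y in B,
          (Complex.I * s - 1 / ((‖x₀ - y‖ : ℝ) : ℂ)) * Phi s x₀ y *
            (((inner ℝ (x₀ - y) h : ℝ) / ‖x₀ - y‖ : ℝ) : ℂ) * f y :=
  stmt3_general B hBb s f hf x₀ hx₀
end

section
/- Let B and D be bounded measurable subsets of ℝ³ of finite Lebesgue measure, let d > 0 satisfy ‖x − y‖ ≥ d for all x ∈ D and y ∈ B, let s ∈ ℂ with Im s ≥ 0, and let f : ℝ³ → ℂ be square-integrable on B. For i ∈ {1,2,3} define wᵢ(x) = ∫_B [ (i s · e^{i s ‖x−y‖} · (xᵢ − yᵢ))/(4π ‖x−y‖²) − (e^{i s ‖x−y‖} · (xᵢ − yᵢ))/(4π ‖x−y‖³) ] f(y) dy. Then ∫_D |wᵢ(x)|² dx ≤ vol(D) · vol(B) · (|s|/(4πd) + 1/(4πd²))² · ∫_B |f(y)|² dy. -/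
/-!
For `x ∈ D`, `y ∈ B` the kernel is bounded by `C = |s|/(4πd) + 1/(4πd²)`, because
`|e^{is‖x−y‖}| ≤ 1` when `Im s ≥ 0` and `|xᵢ − yᵢ| ≤ ‖x − y‖`. Hence
`|wᵢ(x)| ≤ C ∫_B |f| ≤ C vol(B)^{1/2} ‖f‖_{L²(B)}` by Cauchy–Schwarz, and integrating the square
of this constant bound over `D` gives the estimate.
-/

open MeasureTheory

/-- `∂ᵢ Φ_s(·, y)` at `x`, in terms of `r = ‖x − y‖` and `c = xᵢ − yᵢ`. -/
noncomputable def helmholtzGradKernel (s : ℂ) (r c : ℝ) : ℂ :=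
  Complex.I * s * Complex.exp (Complex.I * s * (r : ℂ)) * (c : ℂ) / ((4 * Real.pi * r ^ 2 : ℝ) : ℂ)
    - Complex.exp (Complex.I * s * (r : ℂ)) * (c : ℂ) / ((4 * Real.pi * r ^ 3 : ℝ) : ℂ)

lemma norm_cexp_I_mul_ofReal_le_one {s : ℂ} (hs : 0 ≤ s.im) {r : ℝ} (hr : 0 ≤ r) :
    ‖Complex.exp (Complex.I * s * r)‖ ≤ 1 := by
  rw [Complex.norm_exp, Real.exp_le_one_iff]
  simpa [Complex.mul_re] using mul_nonneg hs hr

lemma norm_helmholtzGradKernel_le {s : ℂ} (hs : 0 ≤ s.im) {d r c : ℝ} (hd : 0 < d) (hr : d ≤ r)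
    (hc : |c| ≤ r) :
    ‖helmholtzGradKernel s r c‖ ≤ ‖s‖ / (4 * Real.pi * d) + 1 / (4 * Real.pi * d ^ 2) := by
  have hr0 : 0 < r := hd.trans_le hr
  have hE := norm_cexp_I_mul_ofReal_le_one hs hr0.le
  set E := Complex.exp (Complex.I * s * r)
  have hfactor : helmholtzGradKernel s r c =
      E * c * (Complex.I * s / ((4 * Real.pi * r ^ 2 : ℝ) : ℂ)
        - 1 / ((4 * Real.pi * r ^ 3 : ℝ) : ℂ)) := by
    simp only [helmholtzGradKernel, E]; ring
  calc ‖helmholtzGradKernel s r c‖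
      ≤ 1 * r * (‖s‖ / (4 * Real.pi * r ^ 2) + 1 / (4 * Real.pi * r ^ 3)) := by
        rw [hfactor, norm_mul, norm_mul]
        gcongr
        · simpa using hc
        · refine (norm_sub_le _ _).trans_eq ?_
          simp [Complex.norm_real, abs_of_pos Real.pi_pos, abs_of_pos hr0]
    _ = ‖s‖ / (4 * Real.pi * r) + 1 / (4 * Real.pi * r ^ 2) := by field_simp
    _ ≤ ‖s‖ / (4 * Real.pi * d) + 1 / (4 * Real.pi * d ^ 2) := by gcongr

lemma sq_integral_norm_le_measureReal_mul_integral_norm_sq {α E : Type*} [MeasurableSpace α]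
    [NormedAddCommGroup E] {μ : Measure α} [IsFiniteMeasure μ] {f : α → E} (hf : MemLp f 2 μ) :
    (∫ a, ‖f a‖ ∂μ) ^ 2 ≤ μ.real Set.univ * ∫ a, ‖f a‖ ^ 2 ∂μ := by
  have hf' : MemLp (fun a => ‖f a‖) (ENNReal.ofReal 2) μ := by simpa using hf.norm
  have hHolder := integral_mul_le_Lp_mul_Lq_of_nonneg Real.HolderConjugate.two_two
    (Filter.Eventually.of_forall fun a => norm_nonneg (f a))
    (Filter.Eventually.of_forall fun _ => zero_le_one) hf' (memLp_const 1)
  simp only [mul_one, one_pow, integral_const, smul_eq_mul, Real.rpow_two,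
    ← Real.sqrt_eq_rpow] at hHolder
  calc (∫ a, ‖f a‖ ∂μ) ^ 2
      ≤ (√(∫ a, ‖f a‖ ^ 2 ∂μ) * √(μ.real Set.univ)) ^ 2 :=
        pow_le_pow_left₀ (integral_nonneg fun a => norm_nonneg _) hHolder 2
    _ = μ.real Set.univ * ∫ a, ‖f a‖ ^ 2 ∂μ := by
        rw [mul_pow, Real.sq_sqrt (integral_nonneg fun a => by positivity),
          Real.sq_sqrt measureReal_nonneg, mul_comm]

lemma sq_norm_setIntegral_mul_le {α 𝕜 : Type*} [MeasurableSpace α] [RCLike 𝕜] {μ : Measure α}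
    {B : Set α} (hB : MeasurableSet B) (hμB : μ B < ⊤) {K f : α → 𝕜} {C : ℝ}
    (hK : ∀ y ∈ B, ‖K y‖ ≤ C) (hf : MemLp f 2 (μ.restrict B)) :
    ‖∫ y in B, K y * f y ∂μ‖ ^ 2 ≤ C ^ 2 * μ.real B * ∫ y in B, ‖f y‖ ^ 2 ∂μ := by
  have : IsFiniteMeasure (μ.restrict B) := isFiniteMeasure_restrict.mpr hμB.ne
  have hbound : ‖∫ y in B, K y * f y ∂μ‖ ≤ C * ∫ y in B, ‖f y‖ ∂μ := by
    rw [← integral_const_mul]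
    refine (norm_integral_le_integral_norm _).trans (integral_mono_of_nonneg
      (.of_forall fun y => norm_nonneg _) ((hf.integrable one_le_two).norm.const_mul C) ?_)
    filter_upwards [ae_restrict_mem hB] with y hy
    rw [norm_mul]
    exact mul_le_mul_of_nonneg_right (hK y hy) (norm_nonneg _)
  calc ‖∫ y in B, K y * f y ∂μ‖ ^ 2 ≤ C ^ 2 * (∫ y in B, ‖f y‖ ∂μ) ^ 2 := by
        rw [← mul_pow]; exact pow_le_pow_left₀ (norm_nonneg _) hbound 2
    _ ≤ C ^ 2 * μ.real B * ∫ y in B, ‖f y‖ ^ 2 ∂μ := by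
        rw [mul_assoc]
        gcongr
        simpa using sq_integral_norm_le_measureReal_mul_integral_norm_sq hf

theorem stmt4_general
    (B D : Set (EuclideanSpace ℝ (Fin 3)))
    (hBm : MeasurableSet B)
    (hBfin : volume B < ⊤) (hDfin : volume D < ⊤)
    (d : ℝ) (hd : 0 < d)
    (hdist : ∀ x ∈ D, ∀ y ∈ B, d ≤ ‖x - y‖)
    (s : ℂ) (hs : 0 ≤ s.im)
    (f : EuclideanSpace ℝ (Fin 3) → ℂ)
    (hf : MemLp f 2 (volume.restrict B))
    (i : Fin 3) :
    (∫ x in D,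
        ‖∫ y in B,
            (Complex.I * s * Complex.exp (Complex.I * s * (‖x - y‖ : ℂ)) *
                ((x i - y i : ℝ) : ℂ) / ((4 * Real.pi * ‖x - y‖ ^ 2 : ℝ) : ℂ)
              - Complex.exp (Complex.I * s * (‖x - y‖ : ℂ)) * ((x i - y i : ℝ) : ℂ) /
                ((4 * Real.pi * ‖x - y‖ ^ 3 : ℝ) : ℂ)) * f y‖ ^ 2) ≤
      (volume D).toReal * (volume B).toReal *
          (‖s‖ / (4 * Real.pi * d) + 1 / (4 * Real.pi * d ^ 2)) ^ 2 *
        ∫ y in B, ‖f y‖ ^ 2 := by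
  set C := ‖s‖ / (4 * Real.pi * d) + 1 / (4 * Real.pi * d ^ 2)
  have hpointwise : ∀ x ∈ D,
      ‖‖∫ y in B, helmholtzGradKernel s ‖x - y‖ (x i - y i) * f y‖ ^ 2‖ ≤
        C ^ 2 * volume.real B * ∫ y in B, ‖f y‖ ^ 2 := by
    intro x hx
    rw [norm_pow, norm_norm]
    refine sq_norm_setIntegral_mul_le hBm hBfin (fun y hy => ?_) hf
    exact norm_helmholtzGradKernel_le hs hd (hdist x hx y hy) (PiLp.norm_apply_le (x - y) i)
  calc _ ≤ C ^ 2 * volume.real B * (∫ y in B, ‖f y‖ ^ 2) * volume.real D :=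
        (le_abs_self _).trans (norm_setIntegral_le_of_norm_le_const hDfin hpointwise)
    _ = _ := by simp only [Measure.real]; ring

/-- Let `B, D ⊂ ℝ³` be bounded measurable sets of finite measure separated by a
distance `d > 0`, `Im s ≥ 0`, and `f` square-integrable on `B`. For the `i`-th derivative of the
volume potential,
`wᵢ(x) = ∫_B [(is e^{is‖x−y‖}(xᵢ−yᵢ))/(4π‖x−y‖²) − (e^{is‖x−y‖}(xᵢ−yᵢ))/(4π‖x−y‖³)] f(y) dy`,
one has `∫_D |wᵢ|² ≤ vol(D)·vol(B)·(|s|/(4πd)+1/(4πd²))² ∫_B |f|²`. -/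
theorem stmt4
    (B D : Set (EuclideanSpace ℝ (Fin 3)))
    (hBb : Bornology.IsBounded B) (hDb : Bornology.IsBounded D)
    (hBm : MeasurableSet B) (hDm : MeasurableSet D)
    (hBfin : volume B < ⊤) (hDfin : volume D < ⊤)
    (d : ℝ) (hd : 0 < d)
    (hdist : ∀ x ∈ D, ∀ y ∈ B, d ≤ ‖x - y‖)
    (s : ℂ) (hs : 0 ≤ s.im)
    (f : EuclideanSpace ℝ (Fin 3) → ℂ)
    (hf : MemLp f 2 (volume.restrict B))
    (i : Fin 3) :
    (∫ x in D,
        ‖∫ y in B,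
            (Complex.I * s * Complex.exp (Complex.I * s * (‖x - y‖ : ℂ)) *
                ((x i - y i : ℝ) : ℂ) / ((4 * Real.pi * ‖x - y‖ ^ 2 : ℝ) : ℂ)
              - Complex.exp (Complex.I * s * (‖x - y‖ : ℂ)) * ((x i - y i : ℝ) : ℂ) /
                ((4 * Real.pi * ‖x - y‖ ^ 3 : ℝ) : ℂ)) * f y‖ ^ 2) ≤
      (volume D).toReal * (volume B).toReal *
          (‖s‖ / (4 * Real.pi * d) + 1 / (4 * Real.pi * d ^ 2)) ^ 2 *
        ∫ y in B, ‖f y‖ ^ 2 :=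
  stmt4_general B D hBm hBfin hDfin d hd hdist s hs f hf i
end

section
/- Let B ⊂ ℝ³ be a bounded measurable set, let s ∈ ℂ, and let g : ℝ³ → ℂ be integrable on B. Then the volume potential v(x) = ∫_B Φ_s(x,y) g(y) dy is twice continuously differentiable on the open set ℝ³ \ closure(B) and satisfies the Helmholtz equation Δv(x) + s² v(x) = 0 for every x ∉ closure(B), where Δ denotes the Laplacian. -/
open MeasureTheory

/-- The Laplacian of `u : ℝ³ → ℂ` at `x`: the sum of the second derivatives of `u` along the
coordinate directions. -/
noncomputable def lap (u : EuclideanSpace ℝ (Fin 3) → ℂ) (x : EuclideanSpace ℝ (Fin 3)) : ℂ :=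
  ∑ i : Fin 3, iteratedDeriv 2 (fun t : ℝ => u (x + t • EuclideanSpace.single i (1 : ℝ))) 0

open Complex Metric Set Filter Function
open scoped Real Topology Convolution InnerProductSpace

/-! Off `closure B` the kernel `Φ_s(x, ·)` is only evaluated on an annulus `a < ‖x - y‖ < b`, so
it may be replaced by a smooth compactly supported kernel `k` agreeing with `Φ_s` there; near such
`x` the potential is then the convolution `1_B g ⋆ k`. Such a convolution is `C²` with Laplacian
`1_B g ⋆ Δk`, and on the annulus `Δk = ΔΦ_s = -s² Φ_s` because the radial profile
`φ(r) = e^{isr} / (4πr)` satisfies `φ'' + (2 / r) φ' = -s² φ`. -/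

namespace Helmholtz

noncomputable def profile (s : ℂ) (r : ℝ) : ℂ :=
  exp (I * s * r) / ((4 * π * r : ℝ) : ℂ)

noncomputable def profileDeriv (s : ℂ) (r : ℝ) : ℂ :=
  exp (I * s * r) * (I * s * r - 1) / (4 * π * (r : ℂ) ^ 2)

noncomputable def profileDeriv2 (s : ℂ) (r : ℝ) : ℂ :=
  exp (I * s * r) * ((I * s * r) ^ 2 - 2 * (I * s * r) + 2) / (4 * π * (r : ℂ) ^ 3)

theorem hasDerivAt_exp_I_mul (s : ℂ) (r : ℝ) :
    HasDerivAt (fun t : ℝ => exp (I * s * t)) (exp (I * s * r) * (I * s)) r := by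
  simpa using ((hasDerivAt_id r).ofReal_comp.const_mul (I * s)).cexp

theorem hasDerivAt_profile (s : ℂ) {r : ℝ} (hr : r ≠ 0) :
    HasDerivAt (profile s) (profileDeriv s r) r := by
  have hden : HasDerivAt (fun t : ℝ => ((4 * π * t : ℝ) : ℂ)) ((4 * π : ℝ) : ℂ) r := by
    simpa using ((hasDerivAt_id r).const_mul (4 * π)).ofReal_comp
  have hne : ((4 * π * r : ℝ) : ℂ) ≠ 0 := by simp [hr, Real.pi_ne_zero]
  refine ((hasDerivAt_exp_I_mul s r).div hden hne).congr_deriv ?_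
  simp only [profileDeriv]
  push_cast
  field_simp

theorem hasDerivAt_profileDeriv (s : ℂ) {r : ℝ} (hr : r ≠ 0) :
    HasDerivAt (profileDeriv s) (profileDeriv2 s r) r := by
  have hlin : HasDerivAt (fun t : ℝ => I * s * t - 1) (I * s) r := by
    simpa using ((hasDerivAt_id r).ofReal_comp.const_mul (I * s)).sub_const 1
  have hden : HasDerivAt (fun t : ℝ => 4 * (π : ℂ) * (t : ℂ) ^ 2) (4 * π * (2 * r : ℂ)) r := by
    simpa [mul_assoc] using ((hasDerivAt_id r).ofReal_comp.pow 2).const_mul (4 * (π : ℂ))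
  have hne : 4 * (π : ℂ) * (r : ℂ) ^ 2 ≠ 0 := by simp [hr, Real.pi_ne_zero]
  refine (((hasDerivAt_exp_I_mul s r).mul hlin).div hden hne).congr_deriv ?_
  simp only [profileDeriv2, Pi.mul_apply]
  field_simp
  ring

theorem profileDeriv2_add_two_div_mul_profileDeriv (s : ℂ) {r : ℝ} (hr : r ≠ 0) :
    profileDeriv2 s r + ((2 / r : ℝ) : ℂ) * profileDeriv s r = -s ^ 2 * profile s r := by
  simp only [profile, profileDeriv, profileDeriv2]
  have hr' : (r : ℂ) ≠ 0 := ofReal_ne_zero.2 hr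
  have hπ : (π : ℂ) ≠ 0 := ofReal_ne_zero.2 Real.pi_ne_zero
  push_cast
  field_simp
  ring_nf
  rw [I_sq]
  ring

theorem contDiffAt_profile_norm {E : Type*} [NormedAddCommGroup E] [InnerProductSpace ℝ E]
    (s : ℂ) {n : WithTop ℕ∞} {z : E} (hz : z ≠ 0) :
    ContDiffAt ℝ n (fun w => profile s ‖w‖) z := by
  have hn : ContDiffAt ℝ n (fun w : E => ‖w‖) z := contDiffAt_norm ℝ hz
  have hc : ContDiffAt ℝ n (fun w : E => ((‖w‖ : ℝ) : ℂ)) z :=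
    ofRealCLM.contDiff.contDiffAt.comp z hn
  have hd : ContDiffAt ℝ n (fun w : E => ((4 * π * ‖w‖ : ℝ) : ℂ)) z :=
    ofRealCLM.contDiff.contDiffAt.comp z (contDiffAt_const.mul hn)
  simp only [profile, div_eq_mul_inv]
  exact (contDiffAt_const.mul hc).cexp.mul (hd.inv (by simp [hz, Real.pi_ne_zero]))

section Radial

variable {E F : Type*} [NormedAddCommGroup E] [InnerProductSpace ℝ E]
  [NormedAddCommGroup F] [NormedSpace ℝ F]

theorem hasDerivAt_norm_add_smul {z e : E} (he : ‖e‖ = 1) {t : ℝ} (h : z + t • e ≠ 0) :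
    HasDerivAt (fun t : ℝ => ‖z + t • e‖) ((⟪z, e⟫_ℝ + t) / ‖z + t • e‖) t := by
  have hline : HasDerivAt (fun t : ℝ => z + t • e) e t := by
    simpa using ((hasDerivAt_id t).smul_const e).const_add z
  have hpos : 0 < ‖z + t • e‖ ^ 2 := by positivity
  have hsqrt := (Real.hasDerivAt_sqrt hpos.ne').comp t hline.norm_sq
  simp only [Function.comp_def, Real.sqrt_sq (norm_nonneg _)] at hsqrt
  refine hsqrt.congr_deriv ?_
  rw [inner_add_left, real_inner_smul_left, real_inner_self_eq_norm_sq, he]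
  field_simp

theorem deriv_deriv_comp_norm_add_smul {f f' f'' : ℝ → F}
    (hf : ∀ r, 0 < r → HasDerivAt f (f' r) r) (hf' : ∀ r, 0 < r → HasDerivAt f' (f'' r) r)
    {z e : E} (hz : z ≠ 0) (he : ‖e‖ = 1) :
    deriv (deriv fun t : ℝ => f ‖z + t • e‖) 0 =
      (⟪z, e⟫_ℝ / ‖z‖) ^ 2 • f'' ‖z‖ + ((‖z‖ ^ 2 - ⟪z, e⟫_ℝ ^ 2) / ‖z‖ ^ 3) • f' ‖z‖ := by
  set c := ⟪z, e⟫_ℝ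
  have hr : 0 < ‖z‖ := norm_pos_iff.2 hz
  have hne : ∀ᶠ t : ℝ in 𝓝 0, z + t • e ≠ 0 :=
    (Continuous.tendsto (by fun_prop) 0).eventually_ne (by simpa using hz)
  have hderiv : deriv (fun t : ℝ => f ‖z + t • e‖) =ᶠ[𝓝 0]
      fun t => ((c + t) / ‖z + t • e‖) • f' ‖z + t • e‖ := by
    filter_upwards [hne] with t ht
    exact ((hf _ (norm_pos_iff.2 ht)).scomp t (hasDerivAt_norm_add_smul he ht)).deriv
  have hρ : HasDerivAt (fun t : ℝ => ‖z + t • e‖) (c / ‖z‖) 0 := by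
    simpa using hasDerivAt_norm_add_smul he (t := 0) (by simpa using hz)
  have hcoef := ((hasDerivAt_id (0 : ℝ)).const_add c).div hρ (by simpa using hr.ne')
  have hf'ρ := (hf' ‖z + (0 : ℝ) • e‖ (by simpa using hr)).scomp 0 hρ
  rw [hderiv.deriv_eq]
  refine (hcoef.smul hf'ρ).deriv.trans ?_
  simp only [id, comp_apply, Pi.div_apply, zero_smul, add_zero, smul_smul]
  congr 2 <;> field_simp

end Radial

local notation "ℝ³" => EuclideanSpace ℝ (Fin 3)

theorem lap_eq_sum_deriv_deriv (u : ℝ³ → ℂ) (x : ℝ³) :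
    lap u x = ∑ i : Fin 3,
      deriv (deriv fun t : ℝ => u (x + t • EuclideanSpace.single i (1 : ℝ))) 0 := by
  simp only [lap, iteratedDeriv_succ, iteratedDeriv_zero]

theorem _root_.Filter.EventuallyEq.lap_eq {u w : ℝ³ → ℂ} {x : ℝ³} (h : u =ᶠ[𝓝 x] w) :
    lap u x = lap w x := by
  simp only [lap_eq_sum_deriv_deriv]
  refine Finset.sum_congr rfl fun i _ => ?_
  have hline : Tendsto (fun t : ℝ => x + t • EuclideanSpace.single i (1 : ℝ)) (𝓝 0) (𝓝 x) :=
    Continuous.tendsto' (by fun_prop) 0 x (by simp)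
  exact (h.comp_tendsto hline).deriv.deriv_eq

theorem deriv_deriv_add_smul {E F : Type*} [NormedAddCommGroup E] [NormedSpace ℝ E]
    [NormedAddCommGroup F] [NormedSpace ℝ F] {u : E → F} (hu : ContDiff ℝ 2 u) (x v : E) :
    deriv (deriv fun t : ℝ => u (x + t • v)) 0 = fderiv ℝ (fderiv ℝ u) x v v := by
  have hline : ∀ t : ℝ, HasDerivAt (fun t : ℝ => x + t • v) v t := fun t => by
    simpa using ((hasDerivAt_id t).smul_const v).const_add x
  have hu1 : ContDiff ℝ 1 (fderiv ℝ u) := hu.fderiv_right (by norm_num)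
  have hfirst : deriv (fun t : ℝ => u (x + t • v)) = fun t => fderiv ℝ u (x + t • v) v :=
    funext fun t =>
      ((hu.differentiable two_ne_zero _).hasFDerivAt.comp_hasDerivAt t (hline t)).deriv
  have hsecond := (((ContinuousLinearMap.apply ℝ F v).hasFDerivAt.comp _
    (hu1.differentiable one_ne_zero _).hasFDerivAt).comp_hasDerivAt 0 (hline 0))
  rw [hfirst]
  simp only [zero_smul, add_zero] at hsecond
  exact hsecond.deriv

theorem lap_eq_sum_fderiv_fderiv {u : ℝ³ → ℂ} (hu : ContDiff ℝ 2 u) (x : ℝ³) :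
    lap u x = ∑ i : Fin 3, fderiv ℝ (fderiv ℝ u) x
      (EuclideanSpace.single i (1 : ℝ)) (EuclideanSpace.single i (1 : ℝ)) := by
  simp only [lap_eq_sum_deriv_deriv, deriv_deriv_add_smul hu]

theorem lap_comp_norm {f f' f'' : ℝ → ℂ}
    (hf : ∀ r, 0 < r → HasDerivAt f (f' r) r) (hf' : ∀ r, 0 < r → HasDerivAt f' (f'' r) r)
    {z : ℝ³} (hz : z ≠ 0) :
    lap (fun w => f ‖w‖) z = f'' ‖z‖ + ((2 / ‖z‖ : ℝ) : ℂ) * f' ‖z‖ := by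
  have hr : 0 < ‖z‖ := norm_pos_iff.2 hz
  have hsum : ∑ i : Fin 3, z i ^ 2 = ‖z‖ ^ 2 := by
    rw [EuclideanSpace.norm_eq, Real.sq_sqrt (by positivity)]
    simp [sq_abs]
  rw [lap_eq_sum_deriv_deriv]
  simp only [deriv_deriv_comp_norm_add_smul hf hf' hz (by simp : ‖EuclideanSpace.single _ (1 : ℝ)‖ = 1),
    EuclideanSpace.inner_single_right, conj_trivial, one_mul, Finset.sum_add_distrib,
    ← Finset.sum_smul]
  have hA : ∑ i : Fin 3, (z i / ‖z‖) ^ 2 = 1 := by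
    simp only [div_pow, ← Finset.sum_div, hsum]
    field_simp
  have hB : ∑ i : Fin 3, (‖z‖ ^ 2 - z i ^ 2) / ‖z‖ ^ 3 = 2 / ‖z‖ := by
    rw [← Finset.sum_div, Finset.sum_sub_distrib, hsum]
    simp only [Finset.sum_const, Finset.card_univ, Fintype.card_fin, nsmul_eq_mul]
    field_simp
    ring
  rw [hA, hB, one_smul, real_smul]

theorem lap_profile_norm (s : ℂ) {z : ℝ³} (hz : z ≠ 0) :
    lap (fun w => profile s ‖w‖) z = -s ^ 2 * profile s ‖z‖ := by
  rw [lap_comp_norm (fun r hr => hasDerivAt_profile s hr.ne')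
      (fun r hr => hasDerivAt_profileDeriv s hr.ne') hz,
    profileDeriv2_add_two_div_mul_profileDeriv s (norm_ne_zero_iff.2 hz)]

theorem lap_convolution {E' : Type*} [NormedAddCommGroup E'] [NormedSpace ℝ E']
    (L : E' →L[ℝ] ℂ →L[ℝ] ℂ) {f : ℝ³ → E'} {k : ℝ³ → ℂ} (hf : LocallyIntegrable f)
    (hk : ContDiff ℝ 2 k) (hks : HasCompactSupport k) (x : ℝ³) :
    lap (f ⋆[L] k) x = (f ⋆[L] lap k) x := by
  have hk1 : ContDiff ℝ 1 (fderiv ℝ k) := hk.fderiv_right (by norm_num)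
  have hk2 : Continuous (fderiv ℝ (fderiv ℝ k)) := hk1.continuous_fderiv one_ne_zero
  have hks1 : HasCompactSupport (fderiv ℝ k) := hks.fderiv ℝ
  have hks2 : HasCompactSupport (fderiv ℝ (fderiv ℝ k)) := hks1.fderiv ℝ
  have hD1 : fderiv ℝ (f ⋆[L] k) = f ⋆[L.precompR ℝ³] fderiv ℝ k :=
    funext fun y => (hks.hasFDerivAt_convolution_right L hf (hk.of_le (by norm_num)) y).fderiv
  have hks2v : ∀ v : ℝ³, HasCompactSupport fun a => fderiv ℝ (fderiv ℝ k) a v := fun v =>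
    hks2.comp_left (g := fun A : ℝ³ →L[ℝ] ℝ³ →L[ℝ] ℂ => A v) rfl
  have hentry : ∀ v : ℝ³, fderiv ℝ (fderiv ℝ (f ⋆[L] k)) x v v =
      (f ⋆[L] fun a => fderiv ℝ (fderiv ℝ k) a v v) x := fun v => by
    rw [hD1, (hks1.hasFDerivAt_convolution_right _ hf hk1 x).fderiv,
      convolution_precompR_apply _ hf hks2 hk2,
      convolution_precompR_apply _ hf (hks2v v) (hk2.clm_apply continuous_const)]
  have hint : ∀ v : ℝ³, Integrable fun t => L (f t) (fderiv ℝ (fderiv ℝ k) (x - t) v v) := fun v =>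
    ((hks2v v).comp_left (g := fun A : ℝ³ →L[ℝ] ℂ => A v) rfl).convolutionExists_right L hf
      ((hk2.clm_apply continuous_const).clm_apply continuous_const) x
  rw [lap_eq_sum_fderiv_fderiv (hks.contDiff_convolution_right L hf hk)]
  simp only [hentry, funext (lap_eq_sum_fderiv_fderiv hk), convolution_def, map_sum]
  rw [integral_finsetSum _ fun i _ => hint _]

theorem exists_contDiff_hasCompactSupport_eqOn_annulus {E F : Type*} [NormedAddCommGroup E]
    [NormedSpace ℝ E] [HasContDiffBump E] [ProperSpace E] [NormedAddCommGroup F]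
    [NormedSpace ℝ F] {n : ℕ∞} {k : E → F} (hk : ∀ z ≠ 0, ContDiffAt ℝ n k z)
    {a b : ℝ} (ha : 0 < a) (hab : a < b) :
    ∃ k' : E → F, ContDiff ℝ n k' ∧ HasCompactSupport k' ∧
      EqOn k' k {z | a < ‖z‖ ∧ ‖z‖ < b} := by
  let φin : ContDiffBump (0 : E) := ⟨a / 2, a, by linarith, by linarith⟩
  let φout : ContDiffBump (0 : E) := ⟨b, b + 1, by linarith, by linarith⟩
  refine ⟨fun z => ((1 - φin z) * φout z) • k z, ?_, ?_, ?_⟩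
  · refine contDiff_iff_contDiffAt.2 fun z => ?_
    rcases lt_or_ge ‖z‖ (a / 2) with hz | hz
    · refine (contDiffAt_const (c := (0 : F))).congr_of_eventuallyEq ?_
      filter_upwards [(isOpen_lt continuous_norm continuous_const).mem_nhds hz] with w hw
      simp [φin.one_of_mem_closedBall (by simpa using hw.le)]
    · have hz0 : z ≠ 0 := by rintro rfl; simp at hz; linarith
      exact ((contDiff_const.sub φin.contDiff).mul φout.contDiff).contDiffAt.smul (hk z hz0)
  · refine HasCompactSupport.intro (isCompact_closedBall 0 (b + 1)) fun z hz => ?_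
    have hz' : b + 1 < ‖z‖ := by simpa using hz
    simp [φout.zero_of_le_dist (x := z) (by simpa using hz'.le)]
  · rintro z ⟨h1, h2⟩
    simp [φin.zero_of_le_dist (by simpa using h1.le),
      φout.one_of_mem_closedBall (by simpa using h2.le)]

theorem exists_ball_sub_mem_annulus {E : Type*} [NormedAddCommGroup E] {B : Set E}
    (hB : Bornology.IsBounded B) {x₀ : E} (hx₀ : x₀ ∉ closure B) :
    ∃ δ > 0, ∃ a b : ℝ, 0 < a ∧ a < b ∧
      ∀ x ∈ ball x₀ δ, ∀ y ∈ B, a < ‖x - y‖ ∧ ‖x - y‖ < b := by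
  obtain ⟨ε, hε, hball⟩ := Metric.isOpen_iff.1 isClosed_closure.isOpen_compl x₀ hx₀
  obtain ⟨R, hR⟩ := hB.subset_closedBall x₀
  have hfar : ∀ y ∈ B, ε ≤ dist x₀ y := fun y hy =>
    not_lt.1 fun h => hball (mem_ball'.2 h) (subset_closure hy)
  refine ⟨ε / 2, by positivity, ε / 2, max R 0 + ε, by positivity, by
    linarith [le_max_right R 0], fun x hx y hy => ?_⟩
  have hx' := mem_ball'.1 hx
  have hy' := mem_closedBall'.1 (hR hy)
  rw [← dist_eq_norm]
  constructor
  · linarith [hfar y hy, dist_triangle x₀ x y]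
  · linarith [dist_triangle x x₀ y, dist_comm x x₀, le_max_left R 0]

theorem setIntegral_mul_eq_convolution_indicator {E : Type*} [NormedAddCommGroup E]
    [MeasurableSpace E] (μ : Measure E) {B : Set E} (hB : MeasurableSet B) {K K' g : E → ℂ}
    {x : E} (h : ∀ y ∈ B, K (x - y) = K' (x - y)) :
    ∫ y in B, K (x - y) * g y ∂μ = (B.indicator g ⋆[ContinuousLinearMap.mul ℝ ℂ, μ] K') x := by
  rw [convolution_def, ← integral_indicator hB]
  congr 1
  funext y
  by_cases hy : y ∈ B
  · simp [hy, h y hy, mul_comm]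
  · simp [hy]

noncomputable def volumePotential (B : Set ℝ³) (s : ℂ) (g : ℝ³ → ℂ) (x : ℝ³) : ℂ :=
  ∫ y in B, Phi s x y * g y

theorem exists_volumePotential_eventuallyEq_convolution {B : Set ℝ³}
    (hBb : Bornology.IsBounded B) (hBm : MeasurableSet B) (s : ℂ) (g : ℝ³ → ℂ) {x₀ : ℝ³}
    (hx₀ : x₀ ∉ closure B) :
    ∃ k : ℝ³ → ℂ, ContDiff ℝ 2 k ∧ HasCompactSupport k ∧
      (∀ y ∈ B, lap k (x₀ - y) = -s ^ 2 * Phi s x₀ y) ∧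
      volumePotential B s g =ᶠ[𝓝 x₀] B.indicator g ⋆[ContinuousLinearMap.mul ℝ ℂ] k := by
  obtain ⟨δ, hδ, a, b, ha, hab, hsep⟩ := exists_ball_sub_mem_annulus hBb hx₀
  obtain ⟨k, hk, hks, hkeq⟩ := exists_contDiff_hasCompactSupport_eqOn_annulus (n := 2)
    (fun (z : ℝ³) hz => contDiffAt_profile_norm s hz) ha hab
  have hA : IsOpen {z : ℝ³ | a < ‖z‖ ∧ ‖z‖ < b} :=
    (isOpen_lt continuous_const continuous_norm).inter (isOpen_lt continuous_norm continuous_const)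
  refine ⟨k, hk, hks, fun y hy => ?_, ?_⟩
  · have hy' := hsep x₀ (mem_ball_self hδ) y hy
    rw [(hkeq.eventuallyEq_of_mem (hA.mem_nhds hy')).lap_eq,
      lap_profile_norm s (norm_pos_iff.1 (ha.trans hy'.1))]
    rfl
  · filter_upwards [ball_mem_nhds x₀ hδ] with x hx
    exact setIntegral_mul_eq_convolution_indicator (K := fun z => profile s ‖z‖) volume hBm
      fun y hy => (hkeq (hsep x hx y hy)).symm

theorem contDiffAt_volumePotential {B : Set ℝ³} (hBb : Bornology.IsBounded B)
    (hBm : MeasurableSet B) (s : ℂ) {g : ℝ³ → ℂ} (hg : IntegrableOn g B) {x₀ : ℝ³}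
    (hx₀ : x₀ ∉ closure B) :
    ContDiffAt ℝ 2 (volumePotential B s g) x₀ := by
  obtain ⟨k, hk, hks, -, hv⟩ := exists_volumePotential_eventuallyEq_convolution hBb hBm s g hx₀
  have hg₀ : LocallyIntegrable (B.indicator g) :=
    ((integrable_indicator_iff hBm).2 hg).locallyIntegrable
  exact (hks.contDiff_convolution_right _ hg₀ hk).contDiffAt.congr_of_eventuallyEq hv

theorem lap_volumePotential_add_sq_mul {B : Set ℝ³} (hBb : Bornology.IsBounded B)
    (hBm : MeasurableSet B) (s : ℂ) {g : ℝ³ → ℂ} (hg : IntegrableOn g B) {x₀ : ℝ³}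
    (hx₀ : x₀ ∉ closure B) :
    lap (volumePotential B s g) x₀ + s ^ 2 * volumePotential B s g x₀ = 0 := by
  obtain ⟨k, hk, hks, hlapk, hv⟩ :=
    exists_volumePotential_eventuallyEq_convolution hBb hBm s g hx₀
  have hg₀ : LocallyIntegrable (B.indicator g) :=
    ((integrable_indicator_iff hBm).2 hg).locallyIntegrable
  have hlapv : (B.indicator g ⋆[ContinuousLinearMap.mul ℝ ℂ] lap k) x₀ =
      ∫ y in B, -s ^ 2 * Phi s x₀ y * g y :=
    (setIntegral_mul_eq_convolution_indicator (K := fun z => -s ^ 2 * profile s ‖z‖) volume hBm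
      fun y hy => (hlapk y hy).symm).symm
  rw [hv.lap_eq, lap_convolution _ hg₀ hk hks, hlapv, volumePotential]
  simp_rw [mul_assoc]
  rw [integral_const_mul]
  ring

end Helmholtz

open Helmholtz in
/-- If `B ⊂ ℝ³` is bounded and measurable and `g` is integrable on `B`, then the
volume potential `v(x) = ∫_B Φ_s(x,y) g(y) dy` is twice continuously differentiable on
`ℝ³ \ closure(B)` and satisfies `Δv + s²v = 0` there. -/
theorem stmt6 (B : Set (EuclideanSpace ℝ (Fin 3)))
    (hBb : Bornology.IsBounded B) (hBm : MeasurableSet B)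
    (s : ℂ) (g : EuclideanSpace ℝ (Fin 3) → ℂ)
    (hg : Integrable g (volume.restrict B)) :
    ContDiffOn ℝ 2 (fun x => ∫ y in B, Phi s x y * g y) (closure B)ᶜ ∧
    ∀ x : EuclideanSpace ℝ (Fin 3), x ∉ closure B →
      lap (fun x' => ∫ y in B, Phi s x' y * g y) x + s ^ 2 * ∫ y in B, Phi s x y * g y = 0 :=
  ⟨fun _ hx => (contDiffAt_volumePotential hBb hBm s hg hx).contDiffWithinAt,
    fun _ hx => lap_volumePotential_add_sq_mul hBb hBm s hg hx⟩
end

section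
/- Let U ⊆ ℝ³ be an open set and a ∈ ℂ. Let v : ℝ³ → ℂ be twice continuously differentiable with compact support contained in U, and let g : ℝ³ → ℂ be twice continuously differentiable on U and square-integrable on U. Assume that Δv(x) + a·v(x) = −g(x) for all x ∈ U and that Δg(x) + conj(a)·g(x) = 0 for all x ∈ U. Then g vanishes identically on U. (Taking the L²(U) inner product of Δv + a v = −g with the conjugate of g and integrating by parts twice gives −∫_U |g|² = ∫_U v·(Δḡ + a ḡ) = 0.) -/
open MeasureTheory

/-!
Pair `Δv + a v = -g` with `conj g` and integrate by parts twice along each coordinate direction: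
since `v` is compactly supported inside `U`, no boundary terms appear and `g` only needs to be
`C²` on `U`. This gives `∫ (Δv + a v) conj g = ∫ v conj (Δg + conj a g) = 0`. On `U` we have
`g = -(Δv + a v)`, and off `tsupport v` the function `Δv + a v` vanishes, so the left side is
`-∫ ‖Δv + a v‖²`. Hence the continuous function `Δv + a v` is identically zero, and so is `g`
on `U`.
-/

section LineDeriv

variable {E F : Type*} [NormedAddCommGroup E] [NormedSpace ℝ E] [NormedAddCommGroup F]
  [NormedSpace ℝ F]

lemma deriv_comp_add_smul_eq_lineDeriv (f : E → F) (x v : E) (s : ℝ) :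
    deriv (fun t : ℝ => f (x + t • v)) s = lineDeriv ℝ f (x + s • v) v := by
  have h : (fun t : ℝ => f (x + s • v + t • v)) = fun t => f (x + (t + s) • v) := by
    funext t; rw [add_smul, add_comm (t • v), add_assoc]
  rw [lineDeriv, h, deriv_comp_add_const (fun t => f (x + t • v)), zero_add]

lemma iteratedDeriv_two_comp_add_smul (f : E → F) (x v : E) :
    iteratedDeriv 2 (fun t : ℝ => f (x + t • v)) 0
      = lineDeriv ℝ (fun y => lineDeriv ℝ f y v) x v := by
  rw [iteratedDeriv_succ, iteratedDeriv_one, funext (deriv_comp_add_smul_eq_lineDeriv f x v)]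
  simpa using deriv_comp_add_smul_eq_lineDeriv (fun y => lineDeriv ℝ f y v) x v 0

lemma lineDeriv_star [StarAddMonoid F] [StarModule ℝ F] [ContinuousStar F] (f : E → F)
    (x v : E) : lineDeriv ℝ (fun y => star (f y)) x v = star (lineDeriv ℝ f x v) :=
  deriv.star

lemma lineDeriv_eq_zero_of_notMem_tsupport {f : E → F} {x : E} (hx : x ∉ tsupport f) (v : E) :
    lineDeriv ℝ f x v = 0 := by
  rw [(notMem_tsupport_iff_eventuallyEq.mp hx).lineDeriv_eq]
  simp [lineDeriv]

lemma tsupport_lineDeriv_subset (f : E → F) (v : E) :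
    tsupport (fun x => lineDeriv ℝ f x v) ⊆ tsupport f :=
  closure_minimal (fun _ hx => by_contra fun h => hx (lineDeriv_eq_zero_of_notMem_tsupport h v))
    (isClosed_tsupport f)

lemma HasCompactSupport.lineDeriv {f : E → F} (hf : HasCompactSupport f) (v : E) :
    HasCompactSupport (fun x => _root_.lineDeriv ℝ f x v) :=
  hf.mono' ((subset_tsupport _).trans (tsupport_lineDeriv_subset f v))

lemma ContDiffOn.lineDeriv_of_isOpen {m n : WithTop ℕ∞} {f : E → F} {U : Set E}
    (hf : ContDiffOn ℝ n f U) (hU : IsOpen U) (hmn : m + 1 ≤ n) (v : E) :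
    ContDiffOn ℝ m (fun x => _root_.lineDeriv ℝ f x v) U := by
  refine ((hf.fderiv_of_isOpen hU hmn).clm_apply (contDiffOn_const (c := v))).congr fun x hx => ?_
  exact ((hf.differentiableOn (ne_of_gt (lt_of_lt_of_le (by simp) hmn))).differentiableAt
    (hU.mem_nhds hx)).lineDeriv_eq_fderiv

lemma ContDiff.lineDeriv {m n : WithTop ℕ∞} {f : E → F} (hf : ContDiff ℝ n f) (hmn : m + 1 ≤ n)
    (v : E) : ContDiff ℝ m (fun x => _root_.lineDeriv ℝ f x v) :=
  contDiffOn_univ.mp (hf.contDiffOn.lineDeriv_of_isOpen isOpen_univ hmn v)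

end LineDeriv

section LocalProduct

variable {E 𝔸 : Type*} [NormedAddCommGroup E] [NormedSpace ℝ E] [NormedRing 𝔸]
  [NormedAlgebra ℝ 𝔸] {P Q : E → 𝔸} {U : Set E}

lemma contDiff_mul_of_tsupport_subset {n : WithTop ℕ∞} (hU : IsOpen U) (hP : ContDiff ℝ n P)
    (hQ : ContDiffOn ℝ n Q U) (hPU : tsupport P ⊆ U) : ContDiff ℝ n fun x => P x * Q x := by
  refine contDiff_iff_contDiffAt.mpr fun x => ?_
  by_cases hx : x ∈ U
  · exact hP.contDiffAt.mul (hQ.contDiffAt (hU.mem_nhds hx))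
  · refine (contDiffAt_const (c := (0 : 𝔸))).congr_of_eventuallyEq ?_
    filter_upwards [notMem_tsupport_iff_eventuallyEq.mp fun h => hx (hPU h)] with y hy
    simp [hy]

variable [MeasurableSpace E] [BorelSpace E]

lemma integrable_mul_of_tsupport_subset (μ : Measure E) [IsFiniteMeasureOnCompacts μ]
    (hU : IsOpen U) (hP : Continuous P) (hPc : HasCompactSupport P) (hQ : ContinuousOn Q U)
    (hPU : tsupport P ⊆ U) : Integrable (fun x => P x * Q x) μ :=
  (contDiff_zero.mp (contDiff_mul_of_tsupport_subset hU (contDiff_zero.mpr hP)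
    (contDiffOn_zero.mpr hQ) hPU)).integrable_of_hasCompactSupport hPc.mul_right

variable [FiniteDimensional ℝ E] (μ : Measure E) [μ.IsAddHaarMeasure]

lemma integral_mul_lineDeriv_eq_neg_lineDeriv_mul_of_tsupport_subset (hU : IsOpen U)
    (hP : ContDiff ℝ 1 P) (hPc : HasCompactSupport P) (hPU : tsupport P ⊆ U)
    (hQ : ContDiffOn ℝ 1 Q U) (v : E) :
    ∫ x, P x * lineDeriv ℝ Q x v ∂μ = -∫ x, lineDeriv ℝ P x v * Q x ∂μ := by
  have hP' : tsupport (fun x => lineDeriv ℝ P x v) ⊆ U :=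
    (tsupport_lineDeriv_subset P v).trans hPU
  refine integral_bilinear_hasLineDerivAt_right_eq_neg_left_of_integrable
    (B := ContinuousLinearMap.mul ℝ 𝔸)
    (integrable_mul_of_tsupport_subset μ hU (hP.lineDeriv (m := 0) (by simp) v).continuous
      (hPc.lineDeriv v) hQ.continuousOn hP')
    (integrable_mul_of_tsupport_subset μ hU hP.continuous hPc
      (hQ.lineDeriv_of_isOpen hU (m := 0) (by simp) v).continuousOn hPU)
    (integrable_mul_of_tsupport_subset μ hU hP.continuous hPc hQ.continuousOn hPU)
    (fun x _ => ((hP.differentiable one_ne_zero) x).lineDifferentiableAt.hasLineDerivAt)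
    (fun x hx => ?_)
  exact ((hQ.differentiableOn one_ne_zero).differentiableAt
    (hU.mem_nhds (hPU hx))).lineDifferentiableAt.hasLineDerivAt

lemma integral_mul_lineDeriv_lineDeriv_eq_of_tsupport_subset (hU : IsOpen U)
    (hP : ContDiff ℝ 2 P) (hPc : HasCompactSupport P) (hPU : tsupport P ⊆ U)
    (hQ : ContDiffOn ℝ 2 Q U) (v : E) :
    ∫ x, P x * lineDeriv ℝ (fun y => lineDeriv ℝ Q y v) x v ∂μ
      = ∫ x, lineDeriv ℝ (fun y => lineDeriv ℝ P y v) x v * Q x ∂μ := by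
  rw [integral_mul_lineDeriv_eq_neg_lineDeriv_mul_of_tsupport_subset μ hU (hP.of_le one_le_two)
      hPc hPU (hQ.lineDeriv_of_isOpen hU (m := 1) (by norm_num) v),
    integral_mul_lineDeriv_eq_neg_lineDeriv_mul_of_tsupport_subset μ hU
      (hP.lineDeriv (m := 1) (by norm_num) v) (hPc.lineDeriv v)
      ((tsupport_lineDeriv_subset P v).trans hPU) (hQ.of_le one_le_two), neg_neg]

end LocalProduct

lemma Continuous.eq_zero_of_integral_norm_sq_eq_zero {X E : Type*} [TopologicalSpace X]
    [MeasurableSpace X] [OpensMeasurableSpace X] {μ : Measure X} [μ.IsOpenPosMeasure]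
    [IsFiniteMeasureOnCompacts μ] [NormedAddCommGroup E] {f : X → E} (hf : Continuous f)
    (hfc : HasCompactSupport f) (h : ∫ x, ‖f x‖ ^ 2 ∂μ = 0) (x : X) : f x = 0 := by
  by_contra hx
  have hpos : 0 < ∫ y, ‖f y‖ ^ 2 ∂μ :=
    (hf.norm.pow 2).integral_pos_of_hasCompactSupport_nonneg_nonzero
      (hfc.comp_left (g := fun t : E => ‖t‖ ^ 2) (by simp)) (fun y => sq_nonneg ‖f y‖)
      (x := x) (by simpa using hx)
  exact hpos.ne' h

section Laplacian

lemma lap_eq_sum_lineDeriv (u : EuclideanSpace ℝ (Fin 3) → ℂ) (x : EuclideanSpace ℝ (Fin 3)) :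
    lap u x = ∑ i : Fin 3, lineDeriv ℝ (fun y => lineDeriv ℝ u y (EuclideanSpace.single i 1)) x
      (EuclideanSpace.single i 1) := by
  simp only [lap, iteratedDeriv_two_comp_add_smul]

lemma lap_conj (u : EuclideanSpace ℝ (Fin 3) → ℂ) (x : EuclideanSpace ℝ (Fin 3)) :
    lap (fun y => (starRingEnd ℂ) (u y)) x = (starRingEnd ℂ) (lap u x) := by
  simp only [lap_eq_sum_lineDeriv, map_sum, starRingEnd_apply, lineDeriv_star]

lemma continuous_lap {u : EuclideanSpace ℝ (Fin 3) → ℂ} (hu : ContDiff ℝ 2 u) :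
    Continuous (lap u) := by
  rw [funext (lap_eq_sum_lineDeriv u)]
  exact continuous_finsetSum _ fun i _ =>
    ((hu.lineDeriv (m := 1) (by norm_num) _).lineDeriv (m := 0) (by simp) _).continuous

lemma lap_eq_zero_of_notMem_tsupport {u : EuclideanSpace ℝ (Fin 3) → ℂ}
    {x : EuclideanSpace ℝ (Fin 3)} (hx : x ∉ tsupport u) : lap u x = 0 := by
  rw [lap_eq_sum_lineDeriv]
  exact Finset.sum_eq_zero fun i _ =>
    lineDeriv_eq_zero_of_notMem_tsupport (fun h => hx (tsupport_lineDeriv_subset u _ h)) _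

lemma integral_helmholtz_mul_eq_integral_mul_helmholtz {U : Set (EuclideanSpace ℝ (Fin 3))}
    {v w : EuclideanSpace ℝ (Fin 3) → ℂ} (hU : IsOpen U) (hv : ContDiff ℝ 2 v)
    (hvc : HasCompactSupport v) (hvU : tsupport v ⊆ U) (hw : ContDiffOn ℝ 2 w U) (a : ℂ) :
    ∫ x, (lap v x + a * v x) * w x = ∫ x, v x * (lap w x + a * w x) := by
  have hvw : Integrable fun x => v x * w x :=
    integrable_mul_of_tsupport_subset volume hU hv.continuous hvc hw.continuousOn hvU
  have hdv_w : ∀ i : Fin 3, Integrable fun x =>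
      lineDeriv ℝ (fun y => lineDeriv ℝ v y (EuclideanSpace.single i 1)) x
        (EuclideanSpace.single i 1) * w x := fun i =>
    integrable_mul_of_tsupport_subset volume hU
      ((hv.lineDeriv (m := 1) (by norm_num) _).lineDeriv (m := 0) (by simp) _).continuous
      ((hvc.lineDeriv _).lineDeriv _) hw.continuousOn
      ((tsupport_lineDeriv_subset _ _).trans ((tsupport_lineDeriv_subset _ _).trans hvU))
  have hv_dw : ∀ i : Fin 3, Integrable fun x =>
      v x * lineDeriv ℝ (fun y => lineDeriv ℝ w y (EuclideanSpace.single i 1)) x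
        (EuclideanSpace.single i 1) := fun i =>
    integrable_mul_of_tsupport_subset volume hU hv.continuous hvc
      (((hw.lineDeriv_of_isOpen hU (m := 1) (by norm_num) _).lineDeriv_of_isOpen hU (m := 0)
        (by simp) _).continuousOn) hvU
  simp_rw [lap_eq_sum_lineDeriv, add_mul, mul_add, Finset.sum_mul, Finset.mul_sum, mul_assoc,
    mul_left_comm (v _) a]
  rw [integral_add (integrable_finsetSum _ fun i _ => hdv_w i) (hvw.const_mul a),
    integral_add (integrable_finsetSum _ fun i _ => hv_dw i) (hvw.const_mul a),
    integral_finsetSum _ fun i _ => hdv_w i, integral_finsetSum _ fun i _ => hv_dw i]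
  congr 1
  exact Finset.sum_congr rfl fun i _ =>
    (integral_mul_lineDeriv_lineDeriv_eq_of_tsupport_subset volume hU hv hvc hvU hw _).symm

end Laplacian

theorem stmt7_general (U : Set (EuclideanSpace ℝ (Fin 3))) (hU : IsOpen U) (a : ℂ)
    (v g : EuclideanSpace ℝ (Fin 3) → ℂ)
    (hv : ContDiff ℝ 2 v) (hvc : HasCompactSupport v) (hvU : tsupport v ⊆ U)
    (hg : ContDiffOn ℝ 2 g U)
    (heq1 : ∀ x ∈ U, lap v x + a * v x = -g x)
    (heq2 : ∀ x ∈ U, lap g x + (starRingEnd ℂ) a * g x = 0) :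
    ∀ x ∈ U, g x = 0 := by
  set w : EuclideanSpace ℝ (Fin 3) → ℂ := fun x => (starRingEnd ℂ) (g x)
  set L : EuclideanSpace ℝ (Fin 3) → ℂ := fun x => lap v x + a * v x with hL
  have hL_off : ∀ x ∉ tsupport v, L x = 0 := fun x hx => by
    simp [hL, lap_eq_zero_of_notMem_tsupport hx, image_eq_zero_of_notMem_tsupport hx]
  have hLw : ∀ x, L x * w x = -((‖L x‖ ^ 2 : ℝ) : ℂ) := fun x => by
    by_cases hx : x ∈ U
    · have hgx : g x = -L x := neg_eq_iff_eq_neg.mp (heq1 x hx).symm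
      rw [show w x = (starRingEnd ℂ) (g x) from rfl, hgx, map_neg, mul_neg, Complex.mul_conj',
        Complex.ofReal_pow]
    · simp [hL_off x fun h => hx (hvU h)]
  have hvw : ∀ x, v x * (lap w x + a * w x) = 0 := fun x => by
    by_cases hx : x ∈ U
    · simpa [w, lap_conj] using congrArg (fun z => v x * (starRingEnd ℂ) z) (heq2 x hx)
    · rw [image_eq_zero_of_notMem_tsupport fun h => hx (hvU h), zero_mul]
  have hnorm : ∫ x, ‖L x‖ ^ 2 = 0 := by
    have h : ∫ x, L x * w x = ∫ x, v x * (lap w x + a * w x) :=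
      integral_helmholtz_mul_eq_integral_mul_helmholtz hU hv hvc hvU
        (Complex.conjCLE.contDiff.comp_contDiffOn hg) a
    simp_rw [hvw, hLw, integral_neg, integral_complex_ofReal, integral_zero, neg_eq_zero] at h
    exact_mod_cast h
  have hL_zero := ((continuous_lap hv).add (continuous_const.mul hv.continuous)
    ).eq_zero_of_integral_norm_sq_eq_zero (HasCompactSupport.intro hvc hL_off) hnorm
  intro x hx
  rw [← neg_eq_zero, ← heq1 x hx]
  exact hL_zero x

/-- Let `U ⊆ ℝ³` be open and `a ∈ ℂ`. If `v` is `C²` with compact support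
contained in `U`, `g` is `C²` on `U` and square-integrable on `U`, `Δv + a v = −g` on `U` and
`Δg + conj(a) g = 0` on `U`, then `g ≡ 0` on `U`. -/
theorem stmt7 (U : Set (EuclideanSpace ℝ (Fin 3))) (hU : IsOpen U) (a : ℂ)
    (v g : EuclideanSpace ℝ (Fin 3) → ℂ)
    (hv : ContDiff ℝ 2 v) (hvc : HasCompactSupport v) (hvU : tsupport v ⊆ U)
    (hg : ContDiffOn ℝ 2 g U) (hgL2 : MemLp g 2 (volume.restrict U))
    (heq1 : ∀ x ∈ U, lap v x + a * v x = -g x)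
    (heq2 : ∀ x ∈ U, lap g x + (starRingEnd ℂ) a * g x = 0) :
    ∀ x ∈ U, g x = 0 :=
  stmt7_general U hU a v g hv hvc hvU hg heq1 heq2
end

section
/- Fix k ∈ ℝ, a center c ∈ ℝ³, a radius R > 0, and points p, q ∈ ℝ³. For σ > 0 put s = k + iσ. Then s² − conj(s)² = 4 i k σ, the product Φ_s(y,p)·conj(Φ_s(y,q)) is integrable on the ball B(c,R), and the function σ ↦ (s² − conj(s)²) · ∫_{B(c,R)} Φ_{k+iσ}(y,p) · conj(Φ_{k+iσ}(y,q)) dy tends to 0 as σ → 0 from the right. -/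
open MeasureTheory

/-!
For `Im s ≥ 0` the exponential has modulus at most one, so `|Φ_s(y,p)| ≤ 1 / (4π |y - p|)`
uniformly in `σ`. In dimension three `|y - p|⁻¹` is square integrable near `p`, so by
Cauchy–Schwarz the volume integral is bounded independently of `σ`, while the prefactor
`s² - conj(s)² = 4ikσ` tends to zero.
-/

open Filter Topology Module

section Singularity

variable {E : Type*} [NormedAddCommGroup E] [NormedSpace ℝ E] [FiniteDimensional ℝ E]
  [MeasurableSpace E] [BorelSpace E] {μ : Measure E} [μ.IsAddHaarMeasure]

lemma integrableOn_norm_sub_rpow_neg (hd : 1 ≤ finrank ℝ E) {α : ℝ} (hα : α < finrank ℝ E)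
    (p : E) {K : Set E} (hK : IsCompact K) :
    IntegrableOn (fun y => ‖y - p‖ ^ (-α)) K μ := by
  have hloc : LocallyIntegrable (fun x : E => ‖x‖ ^ (-α)) μ :=
    locallyIntegrable_of_norm_le_rpow hd hα (C := 1)
      (ae_of_all _ fun x => by rw [one_mul, Real.norm_of_nonneg (by positivity)])
      (measurable_norm.pow_const _).aestronglyMeasurable
  have hK' := hloc.integrableOn_isCompact (hK.image (continuous_sub_right p))
  rw [← (measurePreserving_sub_right μ p).integrableOn_comp_preimage
    (measurableEmbedding_subRight p)] at hK'
  exact hK'.mono_set (Set.subset_preimage_image _ K)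

lemma memLp_two_inv_norm_sub (hd : 2 < finrank ℝ E) (p : E) {B : Set E}
    (hB : Bornology.IsBounded B) :
    MemLp (fun y => ‖y - p‖⁻¹) 2 (μ.restrict B) := by
  refine (memLp_two_iff_integrable_sq (by fun_prop)).2 ?_
  have h := integrableOn_norm_sub_rpow_neg (μ := μ) (by omega) (α := 2) (by exact_mod_cast hd) p
    hB.isCompact_closure
  have hsq : (fun y => ‖y - p‖⁻¹ ^ 2) = fun y => ‖y - p‖ ^ (-2 : ℝ) := by
    ext y
    rw [Real.rpow_neg (norm_nonneg _), inv_pow, Real.rpow_two]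
  rw [hsq]
  exact h.mono_set subset_closure

lemma integrable_inv_norm_sub_mul_inv_norm_sub (hd : 2 < finrank ℝ E) (p q : E) {B : Set E}
    (hB : Bornology.IsBounded B) :
    Integrable (fun y => ‖y - p‖⁻¹ * ‖y - q‖⁻¹) (μ.restrict B) :=
  (memLp_two_inv_norm_sub hd p hB).integrable_mul (memLp_two_inv_norm_sub hd q hB)

end Singularity

lemma Complex.sq_sub_conj_sq (z : ℂ) :
    z ^ 2 - (starRingEnd ℂ z) ^ 2 = 4 * Complex.I * z.re * z.im := by
  apply Complex.ext <;> simp [sq]; ring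

lemma measurable_Phi (s : ℂ) (p : EuclideanSpace ℝ (Fin 3)) :
    Measurable (fun y => Phi s y p) := by
  unfold Phi
  fun_prop

lemma norm_Phi_le {s : ℂ} (hs : 0 ≤ s.im) (y p : EuclideanSpace ℝ (Fin 3)) :
    ‖Phi s y p‖ ≤ (4 * Real.pi)⁻¹ * ‖y - p‖⁻¹ := by
  have hre : (Complex.I * s * (‖y - p‖ : ℂ)).re = -(s.im * ‖y - p‖) := by
    simp [Complex.mul_re]
  rw [Phi, norm_div, Complex.norm_exp, hre, Complex.norm_real,
    Real.norm_of_nonneg (by positivity), ← mul_inv, div_eq_mul_inv]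
  exact mul_le_of_le_one_left (by positivity)
    (Real.exp_le_one_iff.2 (neg_nonpos.2 (by positivity)))

lemma norm_Phi_mul_conj_le {s : ℂ} (hs : 0 ≤ s.im) (y p q : EuclideanSpace ℝ (Fin 3)) :
    ‖Phi s y p * starRingEnd ℂ (Phi s y q)‖ ≤ (4 * Real.pi)⁻¹ ^ 2 * (‖y - p‖⁻¹ * ‖y - q‖⁻¹) :=
  calc ‖Phi s y p * starRingEnd ℂ (Phi s y q)‖
      ≤ ((4 * Real.pi)⁻¹ * ‖y - p‖⁻¹) * ((4 * Real.pi)⁻¹ * ‖y - q‖⁻¹) := by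
        rw [norm_mul, Complex.norm_conj]
        exact mul_le_mul (norm_Phi_le hs y p) (norm_Phi_le hs y q) (norm_nonneg _)
          (by positivity)
    _ = (4 * Real.pi)⁻¹ ^ 2 * (‖y - p‖⁻¹ * ‖y - q‖⁻¹) := by ring

lemma integrable_Phi_majorant {B : Set (EuclideanSpace ℝ (Fin 3))} (hB : Bornology.IsBounded B)
    (p q : EuclideanSpace ℝ (Fin 3)) :
    Integrable (fun y => (4 * Real.pi)⁻¹ ^ 2 * (‖y - p‖⁻¹ * ‖y - q‖⁻¹)) (volume.restrict B) :=
  (integrable_inv_norm_sub_mul_inv_norm_sub (by simp) p q hB).const_mul _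

lemma integrable_Phi_mul_conj {B : Set (EuclideanSpace ℝ (Fin 3))} (hB : Bornology.IsBounded B)
    {s : ℂ} (hs : 0 ≤ s.im) (p q : EuclideanSpace ℝ (Fin 3)) :
    Integrable (fun y => Phi s y p * starRingEnd ℂ (Phi s y q)) (volume.restrict B) :=
  (integrable_Phi_majorant hB p q).mono'
    ((measurable_Phi s p).mul
      (Complex.continuous_conj.measurable.comp (measurable_Phi s q))).aestronglyMeasurable
    (ae_of_all _ fun y => norm_Phi_mul_conj_le hs y p q)

lemma norm_setIntegral_Phi_mul_conj_le {B : Set (EuclideanSpace ℝ (Fin 3))}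
    (hB : Bornology.IsBounded B) {s : ℂ} (hs : 0 ≤ s.im) (p q : EuclideanSpace ℝ (Fin 3)) :
    ‖∫ y in B, Phi s y p * starRingEnd ℂ (Phi s y q)‖ ≤
      ∫ y in B, (4 * Real.pi)⁻¹ ^ 2 * (‖y - p‖⁻¹ * ‖y - q‖⁻¹) :=
  norm_integral_le_of_norm_le (integrable_Phi_majorant hB p q)
    (ae_of_all _ fun y => norm_Phi_mul_conj_le hs y p q)

theorem stmt10_general (k : ℝ) (c : EuclideanSpace ℝ (Fin 3)) (R : ℝ)
    (p q : EuclideanSpace ℝ (Fin 3)) :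
    (∀ σ : ℝ, 0 < σ →
      ((k : ℂ) + (σ : ℂ) * Complex.I) ^ 2
          - (starRingEnd ℂ ((k : ℂ) + (σ : ℂ) * Complex.I)) ^ 2
        = 4 * Complex.I * (k : ℂ) * (σ : ℂ)) ∧
    (∀ σ : ℝ, 0 < σ →
      Integrable
        (fun y => Phi ((k : ℂ) + (σ : ℂ) * Complex.I) y p *
          (starRingEnd ℂ) (Phi ((k : ℂ) + (σ : ℂ) * Complex.I) y q))
        (volume.restrict (Metric.ball c R))) ∧
    Filter.Tendsto
      (fun σ : ℝ =>
        (((k : ℂ) + (σ : ℂ) * Complex.I) ^ 2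
            - (starRingEnd ℂ ((k : ℂ) + (σ : ℂ) * Complex.I)) ^ 2) *
          ∫ y in Metric.ball c R,
            Phi ((k : ℂ) + (σ : ℂ) * Complex.I) y p *
              (starRingEnd ℂ) (Phi ((k : ℂ) + (σ : ℂ) * Complex.I) y q))
      (nhdsWithin 0 (Set.Ioi 0)) (nhds 0) := by
  have hB : Bornology.IsBounded (Metric.ball c R) := Metric.isBounded_ball
  have him {σ : ℝ} (hσ : 0 < σ) : 0 ≤ ((k : ℂ) + (σ : ℂ) * Complex.I).im := by simpa using hσ.le
  have hsq (σ : ℝ) : ((k : ℂ) + (σ : ℂ) * Complex.I) ^ 2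
      - (starRingEnd ℂ ((k : ℂ) + (σ : ℂ) * Complex.I)) ^ 2 = 4 * Complex.I * k * σ := by
    rw [Complex.sq_sub_conj_sq]; simp
  refine ⟨fun σ _ => hsq σ, fun σ hσ => integrable_Phi_mul_conj hB (him hσ) p q, ?_⟩
  have hlin : Tendsto (fun σ : ℝ => 4 * Complex.I * k * σ) (𝓝[>] 0) (𝓝 0) := by
    simpa using ((Complex.continuous_ofReal.tendsto 0).const_mul (4 * Complex.I * k)).mono_left
      nhdsWithin_le_nhds
  simp_rw [hsq]
  apply hlin.zero_mul_isBoundedUnder_le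
  apply isBoundedUnder_of_eventually_le
  exact eventually_nhdsWithin_of_forall fun σ hσ =>
    norm_setIntegral_Phi_mul_conj_le hB (him hσ) p q

/-- Fix `k ∈ ℝ`, a center `c`, a radius `R > 0` and points `p, q ∈ ℝ³`. For
`σ > 0` put `s = k + iσ`. Then `s² − conj(s)² = 4ikσ`, the product `Φ_s(y,p)·conj(Φ_s(y,q))` is
integrable on `B(c,R)`, and `(s² − conj(s)²) ∫_{B(c,R)} Φ_s(y,p) conj(Φ_s(y,q)) dy → 0` as
`σ → 0⁺`. -/
theorem stmt10 (k : ℝ) (c : EuclideanSpace ℝ (Fin 3)) (R : ℝ) (hR : 0 < R)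
    (p q : EuclideanSpace ℝ (Fin 3)) :
    (∀ σ : ℝ, 0 < σ →
      ((k : ℂ) + (σ : ℂ) * Complex.I) ^ 2
          - (starRingEnd ℂ ((k : ℂ) + (σ : ℂ) * Complex.I)) ^ 2
        = 4 * Complex.I * (k : ℂ) * (σ : ℂ)) ∧
    (∀ σ : ℝ, 0 < σ →
      Integrable
        (fun y => Phi ((k : ℂ) + (σ : ℂ) * Complex.I) y p *
          (starRingEnd ℂ) (Phi ((k : ℂ) + (σ : ℂ) * Complex.I) y q))
        (volume.restrict (Metric.ball c R))) ∧
    Filter.Tendsto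
      (fun σ : ℝ =>
        (((k : ℂ) + (σ : ℂ) * Complex.I) ^ 2
            - (starRingEnd ℂ ((k : ℂ) + (σ : ℂ) * Complex.I)) ^ 2) *
          ∫ y in Metric.ball c R,
            Phi ((k : ℂ) + (σ : ℂ) * Complex.I) y p *
              (starRingEnd ℂ) (Phi ((k : ℂ) + (σ : ℂ) * Complex.I) y q))
      (nhdsWithin 0 (Set.Ioi 0)) (nhds 0) :=
  stmt10_general k c R p q
end
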